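/- Let f be a submodular set function on a finite ground set with f(∅) = 0, let 0 ≤ ε < 1 and k' ≥ 1, let T be a finite set, and let y_1, …, y_{k'} ∈ T be distinct elements with S^j := {y_1, …, y_j} (S^0 = ∅) such that for every 1 ≤ j ≤ k' and every x ∈ T \ S^{j−1}, Δ(y_j, S^{j−1}) ≥ (1 − ε)·Δ(x, S^{j−1}) (i.e., each selected element has marginal value at least a (1−ε) fraction of the maximum marginal value, as in the almost linear-time algorithm of Badanidiyuru and Vondrák). Then for every x ∈ T \ S^{k'}, Δ(x, S^{k'}) ≤ (1/(1−ε))·f(S^{k'})/k'; in particular such an algorithm satisfies the second property of a 1/(1−ε)-nice algorithm. -/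

import Mathlib

/-!
Along the greedy chain `∅ = S⁰ ⊆ S¹ ⊆ ⋯ ⊆ S^{k'}`, submodularity gives
`Δ(x, S^{k'}) ≤ Δ(x, S^{j})` for every `j`, and the greedy choice makes each step gain
`f(S^{j+1}) - f(S^j) ≥ (1 - ε) Δ(x, S^j)`. Telescoping over the `k'` steps yields
`k' (1 - ε) Δ(x, S^{k'}) ≤ f(S^{k'}) - f(∅) = f(S^{k'})`.
-/

open Finset

theorem natCast_mul_le_sub_of_le_succ_sub {g : ℕ → ℝ} {a : ℝ} {n : ℕ}
    (h : ∀ m < n, a ≤ g (m + 1) - g m) : n * a ≤ g n - g 0 :=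
  calc (n : ℝ) * a = ∑ _m ∈ range n, a := by simp
    _ ≤ ∑ m ∈ range n, (g (m + 1) - g m) := sum_le_sum fun m hm => h m (mem_range.1 hm)
    _ = g n - g 0 := sum_range_sub g n

section

variable {α : Type*} [DecidableEq α]

def marginal (f : Finset α → ℝ) (x : α) (X : Finset α) : ℝ :=
  f (insert x X) - f X

def IsSubmodular (f : Finset α → ℝ) : Prop :=
  ∀ X Y : Finset α, X ⊆ Y → ∀ x, x ∉ Y → marginal f x Y ≤ marginal f x X

/-- The paper's `S^n = {y_1, …, y_n}`, with `y` indexed from `0`. -/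
def prefixImage {k : ℕ} (y : Fin k → α) (n : ℕ) : Finset α :=
  (univ.filter fun i : Fin k => (i : ℕ) < n).image y

section prefixImage

variable {k : ℕ} (y : Fin k → α)

@[simp]
theorem prefixImage_zero : prefixImage y 0 = ∅ := by
  simp [prefixImage]

@[simp]
theorem prefixImage_self : prefixImage y k = univ.image y := by
  simp [prefixImage]

theorem prefixImage_subset (n : ℕ) : prefixImage y n ⊆ univ.image y :=
  image_subset_image (filter_subset _ _)

theorem prefixImage_succ (j : Fin k) :
    prefixImage y (j + 1) = insert (y j) (prefixImage y j) := by
  ext a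
  simp only [prefixImage, mem_image, mem_filter, mem_univ, true_and, mem_insert]
  constructor
  · rintro ⟨i, hi, rfl⟩
    rcases Nat.lt_succ_iff_lt_or_eq.mp hi with hlt | heq
    · exact Or.inr ⟨i, hlt, rfl⟩
    · exact Or.inl (congrArg y (Fin.ext heq))
  · rintro (rfl | ⟨i, hi, rfl⟩)
    · exact ⟨j, Nat.lt_succ_self _, rfl⟩
    · exact ⟨i, Nat.lt_succ_of_lt hi, rfl⟩

theorem image_filter_lt_eq_prefixImage (j : Fin k) :
    (univ.filter fun i : Fin k => i < j).image y = prefixImage y j := by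
  simp only [prefixImage, Fin.lt_def]

end prefixImage

theorem natCast_mul_marginal_le_of_greedy {f : Finset α → ℝ} (hsub : IsSubmodular f)
    {c : ℝ} (hc : 0 ≤ c) {k : ℕ} (y : Fin k → α) {x : α} (hx : x ∉ univ.image y)
    (hgreedy : ∀ j : Fin k,
      c * marginal f x (prefixImage y j) ≤ marginal f (y j) (prefixImage y j)) :
    k * (c * marginal f x (univ.image y)) ≤ f (univ.image y) - f ∅ := by
  simpa using natCast_mul_le_sub_of_le_succ_sub (g := fun n => f (prefixImage y n)) fun m hm =>
    calc c * marginal f x (univ.image y)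
        ≤ c * marginal f x (prefixImage y m) :=
          mul_le_mul_of_nonneg_left (hsub _ _ (prefixImage_subset y m) x hx) hc
      _ ≤ marginal f (y ⟨m, hm⟩) (prefixImage y m) := hgreedy ⟨m, hm⟩
      _ = f (prefixImage y (m + 1)) - f (prefixImage y m) := by
          rw [marginal, prefixImage_succ y ⟨m, hm⟩]

end

theorem stmt_19_general {α : Type*} [DecidableEq α]
    (f : Finset α → ℝ)
    (hsub : ∀ X Y : Finset α, X ⊆ Y → ∀ x, x ∉ Y →
      f (insert x Y) - f Y ≤ f (insert x X) - f X)
    (hempty : f ∅ = 0)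
    (ε : ℝ) (hε1 : ε < 1)
    (k' : ℕ) (hk' : 1 ≤ k')
    (T : Finset α) (y : Fin k' → α)
    (hgreedy : ∀ j : Fin k',
      ∀ x ∈ T \ (Finset.univ.filter fun i : Fin k' => i < j).image y,
        (1 - ε) * (f (insert x ((Finset.univ.filter fun i : Fin k' => i < j).image y)) -
            f ((Finset.univ.filter fun i : Fin k' => i < j).image y))
          ≤ f (insert (y j) ((Finset.univ.filter fun i : Fin k' => i < j).image y)) -
            f ((Finset.univ.filter fun i : Fin k' => i < j).image y)) :
    ∀ x ∈ T \ Finset.univ.image y,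
      f (insert x (Finset.univ.image y)) - f (Finset.univ.image y)
        ≤ (1 / (1 - ε)) * f (Finset.univ.image y) / (k' : ℝ) := by
  intro x hx
  obtain ⟨hxT, hxS⟩ := mem_sdiff.1 hx
  have hgain : (k' : ℝ) * ((1 - ε) * marginal f x (univ.image y)) ≤ f (univ.image y) := by
    have := natCast_mul_marginal_le_of_greedy hsub (c := 1 - ε) (by linarith) y hxS fun j => by
      have hxj : x ∈ T \ (univ.filter fun i : Fin k' => i < j).image y := by
        rw [image_filter_lt_eq_prefixImage]
        exact mem_sdiff.2 ⟨hxT, fun h => hxS (prefixImage_subset y j h)⟩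
      have h := hgreedy j x hxj
      rwa [image_filter_lt_eq_prefixImage] at h
    rwa [hempty, sub_zero] at this
  have hε : 0 < 1 - ε := by linarith
  have hk : (0 : ℝ) < k' := by exact_mod_cast hk'
  rw [one_div_mul_eq_div, div_div, le_div_iff₀ (by positivity)]
  rw [marginal] at hgain
  linarith

/-- for submodular `f` with `f(∅) = 0`, `0 ≤ ε < 1`, `k' ≥ 1`, distinct
elements `y_1,…,y_{k'} ∈ T` with prefixes `S^j = {y_1,…,y_j}` such that each selected element
has marginal value at least a `(1−ε)` fraction of the maximum marginal value over `T`
(the almost linear-time algorithm of Badanidiyuru–Vondrák), every `x ∈ T \ S^{k'}` satisfies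
`Δ(x, S^{k'}) ≤ (1/(1−ε))·f(S^{k'})/k'` — the second property of a `1/(1−ε)`-nice algorithm. -/
theorem stmt_19 {α : Type*} [DecidableEq α] [Fintype α]
    (f : Finset α → ℝ)
    (hsub : ∀ X Y : Finset α, X ⊆ Y → ∀ x, x ∉ Y →
      f (insert x Y) - f Y ≤ f (insert x X) - f X)
    (hempty : f ∅ = 0)
    (ε : ℝ) (hε0 : 0 ≤ ε) (hε1 : ε < 1)
    (k' : ℕ) (hk' : 1 ≤ k')
    (T : Finset α) (y : Fin k' → α) (hyT : ∀ j, y j ∈ T)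
    (hy : Function.Injective y)
    (hgreedy : ∀ j : Fin k',
      ∀ x ∈ T \ (Finset.univ.filter fun i : Fin k' => i < j).image y,
        (1 - ε) * (f (insert x ((Finset.univ.filter fun i : Fin k' => i < j).image y)) -
            f ((Finset.univ.filter fun i : Fin k' => i < j).image y))
          ≤ f (insert (y j) ((Finset.univ.filter fun i : Fin k' => i < j).image y)) -
            f ((Finset.univ.filter fun i : Fin k' => i < j).image y)) :
    ∀ x ∈ T \ Finset.univ.image y,
      f (insert x (Finset.univ.image y)) - f (Finset.univ.image y)
        ≤ (1 / (1 - ε)) * f (Finset.univ.image y) / (k' : ℝ) :=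
  stmt_19_general f hsub hempty ε hε1 k' hk' T y hgreedy
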